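/- Let ε > 0, let B : ℂ → ℂ be holomorphic on the disk D(0,ε), let P : ℂ → ℂ satisfy P'(z) = B(z) for all z ∈ D(0,ε), and let b ∈ ℂ with |b| ≠ 1. For 0 < |z| < ε define G(z) = b/z + z²·B(z) and ψ(z) = ( G(z) + 1/conj(z), ½(|G(z)|² − 1/|z|²) + Re(G(z)/z) − Re(b/z²) − 2·Re(z·B(z) + P(z)) ) ∈ ℂ × ℝ, and the elliptic paraboloid end ψ̃_P(z) = ( b/z + 1/conj(z), (|b|² − 1)/(2|z|²) ). Then there exists v ∈ ℂ × ℝ such that ψ(z) − ψ̃_P(z) → v as z → 0 (z ≠ 0); i.e., the end is asymptotic to a type-P end. -/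

import Mathlib

open Complex Filter Topology

/-- The surface `ψ` of a normalized complete embedded end of an improper affine front
with Weierstrass data `F = 1/z`, `G = b/z + z²·B(z)` (the case `a = 0`). -/
noncomputable def psiEndP (B P : ℂ → ℂ) (b : ℂ) (z : ℂ) : ℂ × ℝ :=
  (b / z + z ^ 2 * B z + 1 / (starRingEnd ℂ) z,
    (1 / 2 : ℝ) * (‖b / z + z ^ 2 * B z‖ ^ 2 - 1 / ‖z‖ ^ 2)
      + ((b / z + z ^ 2 * B z) / z).re
      - (b / z ^ 2).re
      - 2 * (z * B z + P z).re)

/-- The elliptic paraboloid (type-P) model end. -/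
noncomputable def psiTildeP (b : ℂ) (z : ℂ) : ℂ × ℝ :=
  (b / z + 1 / (starRingEnd ℂ) z,
    (‖b‖ ^ 2 - 1) / (2 * ‖z‖ ^ 2))

lemma key_diff (B P : ℂ → ℂ) (b z : ℂ) (hz : z ≠ 0) :
    psiEndP B P b z - psiTildeP b z =
      (z ^ 2 * B z,
        (b * (starRingEnd ℂ) (z ^ 2 * B z) / z).re
          + (1 / 2 : ℝ) * Complex.normSq (z ^ 2 * B z)
          - (z * B z).re - 2 * (P z).re) := by
  unfold psiEndP psiTildeP
  rw [Prod.mk_sub_mk]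
  refine Prod.ext ?_ ?_
  · simp only
    ring
  · simp only
    have h1 : (b / z + z ^ 2 * B z) / z = b / z ^ 2 + z * B z := by
      field_simp
    have h2 : ‖b / z + z ^ 2 * B z‖ ^ 2
        = Complex.normSq (b / z) + Complex.normSq (z ^ 2 * B z)
          + 2 * ((b / z) * (starRingEnd ℂ) (z ^ 2 * B z)).re := by
      rw [Complex.sq_norm, Complex.normSq_add]
    have h3 : (b / z) * (starRingEnd ℂ) (z ^ 2 * B z)
        = b * (starRingEnd ℂ) (z ^ 2 * B z) / z := by ring
    have h4 : Complex.normSq (b / z) = Complex.normSq b / Complex.normSq z := by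
      simp [Complex.normSq_div]
    rw [h1, h2, h3, h4, Complex.add_re, Complex.add_re, Complex.sq_norm,
      Complex.sq_norm]
    ring

theorem end_asymptotic_typeP (ε : ℝ) (hε : 0 < ε) (B P : ℂ → ℂ)
    (hB : DifferentiableOn ℂ B (Metric.ball (0 : ℂ) ε))
    (hP : ∀ z ∈ Metric.ball (0 : ℂ) ε, HasDerivAt P (B z) z)
    (b : ℂ) (hb : ‖b‖ ≠ 1) :
    ∃ v : ℂ × ℝ,
      Tendsto (fun z : ℂ => psiEndP B P b z - psiTildeP b z)
        (𝓝[≠] (0 : ℂ)) (𝓝 v) := by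
  have h0 : (0 : ℂ) ∈ Metric.ball (0 : ℂ) ε := by simp [hε]
  have hBc : ContinuousAt B 0 :=
    hB.continuousOn.continuousAt (Metric.ball_mem_nhds 0 hε)
  have hPc : ContinuousAt P 0 := (hP 0 h0).continuousAt
  refine ⟨(0, -2 * (P 0).re), ?_⟩
  have hEq : ∀ᶠ z in 𝓝[≠] (0 : ℂ),
      psiEndP B P b z - psiTildeP b z =
        (z ^ 2 * B z,
          (b * (starRingEnd ℂ) (z ^ 2 * B z) / z).re
            + (1 / 2 : ℝ) * Complex.normSq (z ^ 2 * B z)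
            - (z * B z).re - 2 * (P z).re) := by
    filter_upwards [self_mem_nhdsWithin] with z hz
    exact key_diff B P b z hz
  rw [tendsto_congr' hEq]
  -- limits of the pieces, along 𝓝[≠]0
  have hid : Tendsto (fun z : ℂ => z) (𝓝[≠] (0 : ℂ)) (𝓝 0) :=
    tendsto_nhdsWithin_of_tendsto_nhds tendsto_id
  have hBt : Tendsto B (𝓝[≠] (0 : ℂ)) (𝓝 (B 0)) :=
    (hBc.tendsto).comp hid
  have hPt : Tendsto P (𝓝[≠] (0 : ℂ)) (𝓝 (P 0)) :=
    (hPc.tendsto).comp hid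
  have hzB : Tendsto (fun z : ℂ => z * B z) (𝓝[≠] (0 : ℂ)) (𝓝 0) := by
    have := hid.mul hBt
    simpa using this
  have hz2B : Tendsto (fun z : ℂ => z ^ 2 * B z) (𝓝[≠] (0 : ℂ)) (𝓝 0) := by
    have := (hid.pow 2).mul hBt
    simpa using this
  have hT1 : Tendsto (fun z : ℂ => (b * (starRingEnd ℂ) (z ^ 2 * B z) / z).re)
      (𝓝[≠] (0 : ℂ)) (𝓝 0) := by
    have hc : Tendsto (fun z : ℂ => b * (starRingEnd ℂ) (z ^ 2 * B z) / z)
        (𝓝[≠] (0 : ℂ)) (𝓝 0) := by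
      apply squeeze_zero_norm' (a := fun z : ℂ => ‖b‖ * (‖z‖ * ‖B z‖))
      · filter_upwards [self_mem_nhdsWithin] with z hz
        have hz' : ‖z‖ ≠ 0 := norm_ne_zero_iff.mpr hz
        have : ‖b * (starRingEnd ℂ) (z ^ 2 * B z) / z‖
            = ‖b‖ * (‖z‖ ^ 2 * ‖B z‖) / ‖z‖ := by
          simp [map_div₀, map_mul, map_pow]
        have h2 : ‖b‖ * (‖z‖ ^ 2 * ‖B z‖) / ‖z‖
            = ‖b‖ * (‖z‖ * ‖B z‖) := by
          field_simp
        rw [this, h2]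
      · have habs : Tendsto (fun z : ℂ => ‖z‖ * ‖B z‖)
            (𝓝[≠] (0 : ℂ)) (𝓝 0) := by
          have := ((continuous_norm.tendsto 0).comp hid).mul
            ((continuous_norm.tendsto (B 0)).comp hBt)
          simpa using this
        simpa using habs.const_mul (‖b‖)
    have := (Complex.continuous_re.tendsto 0).comp hc
    simpa [Function.comp_def] using this
  have hT2 : Tendsto (fun z : ℂ => (1 / 2 : ℝ) * Complex.normSq (z ^ 2 * B z))
      (𝓝[≠] (0 : ℂ)) (𝓝 0) := by
    have hn : Tendsto (fun z : ℂ => Complex.normSq (z ^ 2 * B z)) (𝓝[≠] (0 : ℂ)) (𝓝 0) := by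
      simpa only [Function.comp_def, map_zero] using (Complex.continuous_normSq.tendsto 0).comp hz2B
    have := hn.const_mul (1 / 2 : ℝ)
    simpa using this
  have hT3 : Tendsto (fun z : ℂ => (z * B z).re) (𝓝[≠] (0 : ℂ)) (𝓝 0) := by
    have := (Complex.continuous_re.tendsto 0).comp hzB
    simpa [Function.comp_def] using this
  have hT4 : Tendsto (fun z : ℂ => 2 * (P z).re) (𝓝[≠] (0 : ℂ)) (𝓝 (2 * (P 0).re)) :=
    tendsto_const_nhds.mul ((Complex.continuous_re.tendsto (P 0)).comp hPt)
  have hsnd : Tendsto (fun z : ℂ =>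
      (b * (starRingEnd ℂ) (z ^ 2 * B z) / z).re
        + (1 / 2 : ℝ) * Complex.normSq (z ^ 2 * B z)
        - (z * B z).re - 2 * (P z).re) (𝓝[≠] (0 : ℂ)) (𝓝 (-2 * (P 0).re)) := by
    have := ((hT1.add hT2).sub hT3).sub hT4
    simpa using this
  exact hz2B.prodMk_nhds hsnd
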